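/- arXiv:2301.08981 — 5 statements merged into one kernel-verified Lean document; each statement's English description precedes it below -/
import Mathlib

section
/- Assume h satisfies the stability property and the pair (h,h°) satisfies the Combinatorial Duality Property. Then the alternating sum of cube weights over all cubes of the rectangle R equals the total drop of h°: Σ_{(ℓ,I) a cube of R} (−1)^{|I|+1} · w((ℓ,I)) = h°(0) − h°(c). -/
open Finset

/-- `cubeE I` is the lattice vector `E_I = ∑_{v ∈ I} E_v`, i.e. the characteristic
vector of the set `I` of coordinates. -/
def cubeE {s : ℕ} (I : Finset (Fin s)) : Fin s → ℤ := fun v => if v ∈ I then 1 else 0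

/-!
Since `h` increases and `h°` decreases along the edges of a cube `(ℓ, I)`, its weight is at
most `h(ℓ + E_I) + h°(ℓ) - h°(0)`. This bound is attained: adding the directions of `I` one at
a time, whenever `h` jumps, stability makes it jump already at the vertex found so far, and
there the duality property keeps `h°` constant. The alternating sum therefore splits into
`∑_m h(m) ∑_{E_I ≤ m} (-1)^{|I|+1} = -h(0) = 0` and
`∑_ℓ (h°(ℓ) - h°(0)) ∑_{E_I ≤ c - ℓ} (-1)^{|I|+1}`, in which only `ℓ = c` survives.
-/

section CubeFunctions

variable {α β γ : Type*} [DecidableEq α] {I : Finset α}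

theorem monotoneOn_Iic_of_le_insert [Preorder β] {f : Finset α → β}
    (hf : ∀ J v, insert v J ⊆ I → v ∉ J → f J ≤ f (insert v J)) :
    MonotoneOn f (Set.Iic I) := by
  intro J _ K (hKI : K ⊆ I) (hJK : J ⊆ K)
  have key := Finset.induction_on' (motive := fun D => f J ≤ f (J ∪ D)) (K \ J)
    (by rw [union_empty]) fun a D haK hD haD ih => by
      rw [mem_sdiff] at haK
      rw [union_insert]
      refine ih.trans (hf _ a ?_ (by simp [haK.2, haD]))
      exact insert_subset (hKI haK.1) (union_subset (hJK.trans hKI) (hD.trans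
        (sdiff_subset.trans hKI)))
  rwa [union_sdiff_of_subset hJK] at key

section PartialOrder

variable [PartialOrder β] {f : Finset α → β}

theorem apply_insert_eq_of_apply_eq
    (hf : ∀ J v, insert v J ⊆ I → v ∉ J → f J ≤ f (insert v J))
    (hstab : ∀ J K v, J ⊆ K → insert v K ⊆ I → v ∉ K → f J = f (insert v J) →
      f K = f (insert v K))
    {J K : Finset α} {v : α} (hJK : J ⊆ K) (hvK : insert v K ⊆ I) (hv : v ∉ K)
    (hfJK : f J = f K) : f (insert v J) = f (insert v K) := by
  have hmono := monotoneOn_Iic_of_le_insert hf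
  have hKI : K ⊆ I := (subset_insert v K).trans hvK
  have key := Finset.induction_on' (motive := fun D => f (insert v J) = f (insert v (J ∪ D)))
    (K \ J) (by rw [union_empty]) fun a D haK hD haD ih => by
      rw [mem_sdiff] at haK
      have hJD : J ∪ D ⊆ K := union_subset hJK (hD.trans sdiff_subset)
      have haJD : a ∉ J ∪ D := by simp [haK.2, haD]
      have haJDK : insert a (J ∪ D) ⊆ K := insert_subset haK.1 hJD
      have hflat : f (J ∪ D) = f (insert a (J ∪ D)) := by
        refine le_antisymm (hf _ a (haJDK.trans hKI) haJD) ?_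
        calc f (insert a (J ∪ D)) ≤ f K := hmono (haJDK.trans hKI) hKI haJDK
          _ = f J := hfJK.symm
          _ ≤ f (J ∪ D) := hmono (hJK.trans hKI) (hJD.trans hKI) subset_union_left
      have hav : a ≠ v := fun hav => hv (hav ▸ haK.1)
      rw [union_insert, insert_comm]
      refine ih.trans (hstab _ _ a (subset_insert _ _) ?_ (by simp [hav, haJD]) hflat)
      rw [insert_comm]
      exact (insert_subset_insert v haJDK).trans hvK
  rwa [union_sdiff_of_subset hJK] at key

theorem exists_subset_eq_top_and_eq_bot {g : Finset α → γ}
    (hf : ∀ J v, insert v J ⊆ I → v ∉ J → f J ≤ f (insert v J))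
    (hstab : ∀ J K v, J ⊆ K → insert v K ⊆ I → v ∉ K → f J = f (insert v J) →
      f K = f (insert v K))
    (hfg : ∀ J v, insert v J ⊆ I → v ∉ J →
      f (insert v J) = f J ∨ g (insert v J) = g J) :
    ∃ J ⊆ I, f J = f I ∧ g J = g ∅ := by
  refine Finset.induction_on' (motive := fun K => ∃ J ⊆ K, f J = f K ∧ g J = g ∅) I
    ⟨∅, subset_refl _, rfl, rfl⟩ fun a K haI hKI haK ⟨J, hJK, hfJ, hgJ⟩ => ?_
  have haKI : insert a K ⊆ I := insert_subset haI hKI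
  by_cases hflat : f K = f (insert a K)
  · exact ⟨J, hJK.trans (subset_insert a K), hfJ.trans hflat, hgJ⟩
  have haJ : a ∉ J := fun h => haK (hJK h)
  have hjump : f (insert a J) ≠ f J := fun h => hflat (hstab J K a hJK haKI haK h.symm)
  have hga : g (insert a J) = g J :=
    (hfg J a ((insert_subset_insert a hJK).trans haKI) haJ).resolve_left hjump
  exact ⟨insert a J, insert_subset_insert a hJK,
    apply_insert_eq_of_apply_eq hf hstab hJK haKI haK hfJ, hga.trans hgJ⟩

end PartialOrder

theorem sup'_powerset_add_eq [LinearOrder β] [AddCommMonoid β] [IsOrderedAddMonoid β]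
    {f g : Finset α → β}
    (hf : ∀ J v, insert v J ⊆ I → v ∉ J → f J ≤ f (insert v J))
    (hg : ∀ J v, insert v J ⊆ I → v ∉ J → g (insert v J) ≤ g J)
    (hstab : ∀ J K v, J ⊆ K → insert v K ⊆ I → v ∉ K → f J = f (insert v J) →
      f K = f (insert v K))
    (hfg : ∀ J v, insert v J ⊆ I → v ∉ J →
      f (insert v J) = f J ∨ g (insert v J) = g J) :
    I.powerset.sup' (powerset_nonempty I) (fun J => f J + g J) = f I + g ∅ := by
  have hfmono := monotoneOn_Iic_of_le_insert hf
  have hganti := monotoneOn_Iic_of_le_insert (β := βᵒᵈ) hg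
  refine le_antisymm (sup'_le _ _ fun J hJ => ?_) ?_
  · rw [mem_powerset] at hJ
    exact add_le_add (hfmono hJ Set.self_mem_Iic hJ)
      (hganti (empty_subset I) hJ (empty_subset J))
  · obtain ⟨J, hJ, hfJ, hgJ⟩ := exists_subset_eq_top_and_eq_bot hf hstab hfg
    rw [← hfJ, ← hgJ]
    exact le_sup' (fun J => f J + g J) (mem_powerset.2 hJ)

end CubeFunctions

section Box

variable {s : ℕ} {c ℓ m : Fin s → ℤ} {I J K : Finset (Fin s)} {v : Fin s}

theorem cubeE_nonneg (I : Finset (Fin s)) : 0 ≤ cubeE I := fun v => by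
  unfold cubeE; split_ifs <;> simp

theorem cubeE_empty : cubeE (∅ : Finset (Fin s)) = 0 := by
  ext v; simp [cubeE]

theorem cubeE_apply_of_notMem (hv : v ∉ I) : cubeE I v = 0 := if_neg hv

theorem cubeE_union (h : Disjoint J K) : cubeE (J ∪ K) = cubeE J + cubeE K := by
  ext v
  by_cases hJ : v ∈ J <;> by_cases hK : v ∈ K
  · exact absurd hK (disjoint_left.1 h hJ)
  all_goals simp [cubeE, hJ, hK]

theorem cubeE_mono (h : J ⊆ K) : cubeE J ≤ cubeE K := by
  rw [← union_sdiff_of_subset h, cubeE_union disjoint_sdiff]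
  exact le_add_of_nonneg_right (cubeE_nonneg _)

theorem add_cubeE_insert (ℓ : Fin s → ℤ) (hv : v ∉ J) :
    ℓ + cubeE (insert v J) = ℓ + cubeE J + cubeE {v} := by
  rw [insert_eq, cubeE_union (disjoint_singleton_left.2 hv), add_comm (cubeE {v}), add_assoc]

theorem add_cubeE_le_of_subset (hI : ℓ + cubeE I ≤ c) (hJ : J ⊆ I) : ℓ + cubeE J ≤ c :=
  (add_le_add_right (cubeE_mono hJ) ℓ).trans hI

theorem cubeE_le_iff (hm : 0 ≤ m) : cubeE I ≤ m ↔ I ⊆ univ.filter (fun v => 0 < m v) := by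
  refine ⟨fun h v hv => ?_, fun h v => ?_⟩
  · simpa [cubeE, hv, Order.one_le_iff_pos] using h v
  · by_cases hv : v ∈ I
    · simpa [cubeE, hv, ← Order.one_le_iff_pos] using h hv
    · simpa [cubeE, hv] using hm v

open scoped Classical in
theorem sum_filter_cubeE_le_neg_one_pow_mul (hm : 0 ≤ m) (x : ℤ) :
    ∑ I ∈ univ.powerset.filter (fun I => cubeE I ≤ m), (-1 : ℤ) ^ (I.card + 1) * x =
      if m = 0 then -x else 0 := by
  have hfilter : univ.powerset.filter (fun I => cubeE I ≤ m) =
      (univ.filter (fun v => 0 < m v)).powerset := by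
    ext I; simp [cubeE_le_iff hm]
  have hsupp : univ.filter (fun v => 0 < m v) = ∅ ↔ m = 0 := by
    simp only [filter_eq_empty_iff, mem_univ, true_implies, not_lt, funext_iff, Pi.zero_apply]
    exact forall_congr' fun v => (hm v).ge_iff_eq'
  simp only [hfilter, pow_succ, mul_assoc, ← sum_mul, sum_powerset_neg_one_pow_card, hsupp]
  split_ifs <;> ring

variable {h h0 : (Fin s → ℤ) → ℤ}

theorem cube_edge_of_box_edge {P : (Fin s → ℤ) → (Fin s → ℤ) → Prop}
    (H : ∀ ℓ v, 0 ≤ ℓ → ℓ + cubeE {v} ≤ c → P ℓ (ℓ + cubeE {v}))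
    (hℓ : 0 ≤ ℓ) (hI : ℓ + cubeE I ≤ c) (J : Finset (Fin s)) (v : Fin s)
    (hJ : insert v J ⊆ I) (hv : v ∉ J) :
    P (ℓ + cubeE J) (ℓ + cubeE (insert v J)) := by
  have hbound := add_cubeE_le_of_subset hI hJ
  rw [add_cubeE_insert ℓ hv] at hbound ⊢
  exact H _ v (add_nonneg hℓ (cubeE_nonneg J)) hbound

theorem cube_stable_of_box_stable
    (h_stab : ∀ (ℓ ℓbar : Fin s → ℤ) (v : Fin s), 0 ≤ ℓ → ℓ + cubeE {v} ≤ c →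
      0 ≤ ℓbar → ℓbar v = 0 → ℓ + ℓbar + cubeE {v} ≤ c →
      h ℓ = h (ℓ + cubeE {v}) → h (ℓ + ℓbar) = h (ℓ + ℓbar + cubeE {v}))
    (hℓ : 0 ≤ ℓ) (hI : ℓ + cubeE I ≤ c) (J K : Finset (Fin s)) (v : Fin s)
    (hJK : J ⊆ K) (hK : insert v K ⊆ I) (hv : v ∉ K)
    (hJ : h (ℓ + cubeE J) = h (ℓ + cubeE (insert v J))) :
    h (ℓ + cubeE K) = h (ℓ + cubeE (insert v K)) := by
  have hvJ : v ∉ J := fun hvJ => hv (hJK hvJ)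
  have hKJ : ℓ + cubeE K = ℓ + cubeE J + cubeE (K \ J) := by
    rw [add_assoc, ← cubeE_union disjoint_sdiff, union_sdiff_of_subset hJK]
  have htop := add_cubeE_le_of_subset hI hK
  have hside := add_cubeE_le_of_subset hI ((insert_subset_insert v hJK).trans hK)
  rw [add_cubeE_insert ℓ hv, hKJ] at htop ⊢
  rw [add_cubeE_insert ℓ hvJ] at hside hJ
  exact h_stab _ _ v (add_nonneg hℓ (cubeE_nonneg J)) hside (cubeE_nonneg _)
    (cubeE_apply_of_notMem fun hvKJ => hv (mem_sdiff.1 hvKJ).1) htop hJ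

theorem cube_weight_eq
    (h_mono : ∀ (ℓ : Fin s → ℤ) (v : Fin s), 0 ≤ ℓ → ℓ + cubeE {v} ≤ c →
      h ℓ ≤ h (ℓ + cubeE {v}))
    (h0_anti : ∀ (ℓ : Fin s → ℤ) (v : Fin s), 0 ≤ ℓ → ℓ + cubeE {v} ≤ c →
      h0 (ℓ + cubeE {v}) ≤ h0 ℓ)
    (h_stab : ∀ (ℓ ℓbar : Fin s → ℤ) (v : Fin s), 0 ≤ ℓ → ℓ + cubeE {v} ≤ c →
      0 ≤ ℓbar → ℓbar v = 0 → ℓ + ℓbar + cubeE {v} ≤ c →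
      h ℓ = h (ℓ + cubeE {v}) → h (ℓ + ℓbar) = h (ℓ + ℓbar + cubeE {v}))
    (h_cdp : ∀ (ℓ : Fin s → ℤ) (v : Fin s), 0 ≤ ℓ → ℓ + cubeE {v} ≤ c →
      h (ℓ + cubeE {v}) - h ℓ = 0 ∨ h0 (ℓ + cubeE {v}) - h0 ℓ = 0)
    (hℓ : 0 ≤ ℓ) (hI : ℓ + cubeE I ≤ c) :
    I.powerset.sup' (powerset_nonempty I)
        (fun I' => h (ℓ + cubeE I') + h0 (ℓ + cubeE I') - h0 0) =
      h (ℓ + cubeE I) + h0 ℓ - h0 0 := by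
  have key := sup'_powerset_add_eq
    (f := fun J => h (ℓ + cubeE J)) (g := fun J => h0 (ℓ + cubeE J) - h0 0)
    (cube_edge_of_box_edge (P := fun a b => h a ≤ h b) h_mono hℓ hI)
    (fun J v hJ hv => sub_le_sub_right
      (cube_edge_of_box_edge (P := fun a b => h0 b ≤ h0 a) h0_anti hℓ hI J v hJ hv) _)
    (cube_stable_of_box_stable h_stab hℓ hI)
    (fun J v hJ hv =>
      (cube_edge_of_box_edge (P := fun a b => h b - h a = 0 ∨ h0 b - h0 a = 0)
        h_cdp hℓ hI J v hJ hv).imp sub_eq_zero.1 fun e => by rw [sub_eq_zero.1 e])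
  simp only [cubeE_empty, add_zero] at key
  simp_rw [add_sub_assoc]
  exact key

open scoped Classical in
theorem sum_Icc_sum_add_cubeE (F : (Fin s → ℤ) → Finset (Fin s) → ℤ) :
    ∑ ℓ ∈ Icc 0 c, ∑ I ∈ univ.powerset.filter (fun I => ℓ + cubeE I ≤ c),
        F (ℓ + cubeE I) I =
      ∑ m ∈ Icc 0 c, ∑ I ∈ univ.powerset.filter (fun I => cubeE I ≤ m), F m I := by
  rw [sum_sigma', sum_sigma']
  refine sum_nbij' (fun p => ⟨p.1 + cubeE p.2, p.2⟩) (fun p => ⟨p.1 - cubeE p.2, p.2⟩)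
    ?_ ?_ (by simp) (by simp) fun _ _ => rfl
  · simp only [mem_sigma, mem_Icc, mem_filter, mem_powerset, subset_univ, true_and]
    rintro ⟨ℓ, I⟩ ⟨⟨hℓ, -⟩, hI⟩
    exact ⟨⟨add_nonneg hℓ (cubeE_nonneg I), hI⟩, le_add_of_nonneg_left hℓ⟩
  · simp only [mem_sigma, mem_Icc, mem_filter, mem_powerset, subset_univ, true_and]
    rintro ⟨m, I⟩ ⟨⟨-, hm⟩, hI⟩
    exact ⟨⟨sub_nonneg.2 hI, (sub_le_self _ (cubeE_nonneg I)).trans hm⟩,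
      by rwa [sub_add_cancel]⟩

end Box

open scoped Classical in
theorem statement0_general {s : ℕ} (c : Fin s → ℤ)
    (hc : cubeE (Finset.univ : Finset (Fin s)) ≤ c)
    (h h0 : (Fin s → ℤ) → ℤ)
    (h_zero : h 0 = 0)
    (h_mono : ∀ (ℓ : Fin s → ℤ) (v : Fin s), 0 ≤ ℓ → ℓ + cubeE {v} ≤ c →
      h ℓ ≤ h (ℓ + cubeE {v}))
    (h0_anti : ∀ (ℓ : Fin s → ℤ) (v : Fin s), 0 ≤ ℓ → ℓ + cubeE {v} ≤ c →
      h0 (ℓ + cubeE {v}) ≤ h0 ℓ)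
    (h_stab : ∀ (ℓ ℓbar : Fin s → ℤ) (v : Fin s), 0 ≤ ℓ → ℓ + cubeE {v} ≤ c →
      0 ≤ ℓbar → ℓbar v = 0 → ℓ + ℓbar + cubeE {v} ≤ c →
      h ℓ = h (ℓ + cubeE {v}) → h (ℓ + ℓbar) = h (ℓ + ℓbar + cubeE {v}))
    (h_cdp : ∀ (ℓ : Fin s → ℤ) (v : Fin s), 0 ≤ ℓ → ℓ + cubeE {v} ≤ c →
      h (ℓ + cubeE {v}) - h ℓ = 0 ∨ h0 (ℓ + cubeE {v}) - h0 ℓ = 0) :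
    ∑ ℓ ∈ Finset.Icc (0 : Fin s → ℤ) c,
      ∑ I ∈ (Finset.univ : Finset (Fin s)).powerset.filter (fun I => ℓ + cubeE I ≤ c),
        (-1 : ℤ) ^ (I.card + 1) *
          I.powerset.sup' (Finset.powerset_nonempty I)
            (fun I' => h (ℓ + cubeE I') + h0 (ℓ + cubeE I') - h0 0)
      = h0 0 - h0 c := by
  have hc0 : 0 ≤ c := (cubeE_nonneg _).trans hc
  calc _ = ∑ ℓ ∈ Icc 0 c, ∑ I ∈ univ.powerset.filter (fun I => ℓ + cubeE I ≤ c),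
          ((-1 : ℤ) ^ (I.card + 1) * h (ℓ + cubeE I) +
            (-1) ^ (I.card + 1) * (h0 ℓ - h0 0)) := by
        refine sum_congr rfl fun ℓ hℓ => sum_congr rfl fun I hI => ?_
        rw [cube_weight_eq h_mono h0_anti h_stab h_cdp (mem_Icc.1 hℓ).1 (mem_filter.1 hI).2]
        ring
    _ = ∑ m ∈ Icc 0 c, ∑ I ∈ univ.powerset.filter (fun I => cubeE I ≤ m),
          (-1 : ℤ) ^ (I.card + 1) * h m +
        ∑ ℓ ∈ Icc 0 c, ∑ I ∈ univ.powerset.filter (fun I => cubeE I ≤ c - ℓ),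
          (-1 : ℤ) ^ (I.card + 1) * (h0 ℓ - h0 0) := by
        simp_rw [sum_add_distrib, le_sub_iff_add_le']
        rw [sum_Icc_sum_add_cubeE fun m I => (-1 : ℤ) ^ (I.card + 1) * h m]
    _ = ∑ m ∈ Icc 0 c, (if m = 0 then -h m else 0) +
        ∑ ℓ ∈ Icc 0 c, (if c = ℓ then -(h0 ℓ - h0 0) else 0) := by
        congr 1 <;> refine sum_congr rfl fun ℓ hℓ => ?_
        · exact sum_filter_cubeE_le_neg_one_pow_mul (mem_Icc.1 hℓ).1 _
        · rw [sum_filter_cubeE_le_neg_one_pow_mul (sub_nonneg.2 (mem_Icc.1 hℓ).2)]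
          exact if_congr sub_eq_zero rfl rfl
    _ = h0 0 - h0 c := by
        rw [sum_ite_eq', sum_ite_eq, if_pos (left_mem_Icc.2 hc0), if_pos (right_mem_Icc.2 hc0),
          h_zero]
        ring

open scoped Classical in
/-- if `h` satisfies the stability property and `(h, h°)` satisfies the
Combinatorial Duality Property, then
`Σ_{(ℓ,I) a cube of R} (−1)^{|I|+1} · w((ℓ,I)) = h°(0) − h°(c)`. -/
theorem statement0 {s : ℕ} (hs : 1 ≤ s) (c : Fin s → ℤ)
    (hc : cubeE (Finset.univ : Finset (Fin s)) ≤ c)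
    (h h0 : (Fin s → ℤ) → ℤ)
    (h_zero : h 0 = 0)
    (h_mono : ∀ (ℓ : Fin s → ℤ) (v : Fin s), 0 ≤ ℓ → ℓ + cubeE {v} ≤ c →
      h ℓ ≤ h (ℓ + cubeE {v}))
    (h0_anti : ∀ (ℓ : Fin s → ℤ) (v : Fin s), 0 ≤ ℓ → ℓ + cubeE {v} ≤ c →
      h0 (ℓ + cubeE {v}) ≤ h0 ℓ)
    (h_stab : ∀ (ℓ ℓbar : Fin s → ℤ) (v : Fin s), 0 ≤ ℓ → ℓ + cubeE {v} ≤ c →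
      0 ≤ ℓbar → ℓbar v = 0 → ℓ + ℓbar + cubeE {v} ≤ c →
      h ℓ = h (ℓ + cubeE {v}) → h (ℓ + ℓbar) = h (ℓ + ℓbar + cubeE {v}))
    (h_cdp : ∀ (ℓ : Fin s → ℤ) (v : Fin s), 0 ≤ ℓ → ℓ + cubeE {v} ≤ c →
      h (ℓ + cubeE {v}) - h ℓ = 0 ∨ h0 (ℓ + cubeE {v}) - h0 ℓ = 0) :
    ∑ ℓ ∈ Finset.Icc (0 : Fin s → ℤ) c,
      ∑ I ∈ (Finset.univ : Finset (Fin s)).powerset.filter (fun I => ℓ + cubeE I ≤ c),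
        (-1 : ℤ) ^ (I.card + 1) *
          I.powerset.sup' (Finset.powerset_nonempty I)
            (fun I' => h (ℓ + cubeE I') + h0 (ℓ + cubeE I') - h0 0)
      = h0 0 - h0 c :=
  statement0_general c hc h h0 h_zero h_mono h0_anti h_stab h_cdp
end

section
/- Assume h satisfies the stability property and the pair (h,h°) satisfies the Combinatorial Duality Property. Then for every cube (ℓ,I) of R, the weight of the cube exceeds the weight of its base vertex exactly by the increment of h along its main diagonal: max{w(ℓ+E_{I'}) : I' ⊆ I} − w(ℓ) = h(ℓ+E_I) − h(ℓ). -/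
/-!
The upper bound `w(ℓ + E_{I'}) ≤ w(ℓ) + h(ℓ + E_I) − h(ℓ)` is immediate from `h` increasing and
`h°` decreasing. For the lower bound one finds a vertex `ℓ + E_{I'}` of the cube at which `h` already
takes its top value `h(ℓ + E_I)` while `h°` still takes its bottom value `h°(ℓ)`. It is built one
direction `v ∈ I` at a time: by CDP either `h` is constant along `E_v` at `ℓ`, and by stability then
along `E_v` over the whole face, so `v` may be dropped; or `h°` is constant along `E_v` at `ℓ`, and
one moves the base vertex to `ℓ + E_v`.
-/

open Finset

namespace Cube

variable {s : ℕ}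

lemma cubeE_nonneg (I : Finset (Fin s)) : 0 ≤ cubeE I := fun v => by
  unfold cubeE; split_ifs <;> simp

lemma cubeE_empty : cubeE (∅ : Finset (Fin s)) = 0 := by
  funext v; simp [cubeE]

lemma cubeE_mono {J K : Finset (Fin s)} (hJK : J ⊆ K) : cubeE J ≤ cubeE K := fun v => by
  unfold cubeE
  split_ifs with hJ hK
  exacts [le_rfl, absurd (hJK hJ) hK, zero_le_one, le_rfl]

lemma cubeE_union {J K : Finset (Fin s)} (hJK : Disjoint J K) :
    cubeE (J ∪ K) = cubeE J + cubeE K := by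
  funext v
  by_cases hJ : v ∈ J
  · simp [cubeE, hJ, disjoint_left.mp hJK hJ]
  · simp [cubeE, hJ]

lemma cubeE_insert {J : Finset (Fin s)} {v : Fin s} (hv : v ∉ J) :
    cubeE (insert v J) = cubeE J + cubeE {v} := by
  rw [insert_eq, cubeE_union (disjoint_singleton_left.mpr hv), add_comm]

lemma add_cubeE_le_of_subset {c ℓ : Fin s → ℤ} {J K : Finset (Fin s)} (hJK : J ⊆ K)
    (hK : ℓ + cubeE K ≤ c) : ℓ + cubeE J ≤ c :=
  (add_le_add_right (cubeE_mono hJK) ℓ).trans hK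

def StepMonotoneOnBox {β : Type*} [Preorder β] (c : Fin s → ℤ) (f : (Fin s → ℤ) → β) : Prop :=
  ∀ (ℓ : Fin s → ℤ) (v : Fin s), 0 ≤ ℓ → ℓ + cubeE {v} ≤ c → f ℓ ≤ f (ℓ + cubeE {v})

namespace StepMonotoneOnBox

variable {β : Type*} [Preorder β] {c : Fin s → ℤ} {f : (Fin s → ℤ) → β}

lemma le_add_cubeE (hf : StepMonotoneOnBox c f) {ℓ : Fin s → ℤ} (hℓ : 0 ≤ ℓ)
    (D : Finset (Fin s)) (hD : ℓ + cubeE D ≤ c) : f ℓ ≤ f (ℓ + cubeE D) := by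
  induction D using Finset.induction_on with
  | empty => simp [cubeE_empty]
  | insert v D hv ih =>
    have hD' : ℓ + cubeE D ≤ c := add_cubeE_le_of_subset (subset_insert v D) hD
    rw [cubeE_insert hv, ← add_assoc] at hD ⊢
    exact (ih hD').trans (hf _ v (add_nonneg hℓ (cubeE_nonneg D)) hD)

lemma add_cubeE_le_add_cubeE (hf : StepMonotoneOnBox c f) {ℓ : Fin s → ℤ} (hℓ : 0 ≤ ℓ)
    {J K : Finset (Fin s)} (hJK : J ⊆ K) (hK : ℓ + cubeE K ≤ c) :
    f (ℓ + cubeE J) ≤ f (ℓ + cubeE K) := by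
  have hsplit : ℓ + cubeE K = ℓ + cubeE J + cubeE (K \ J) := by
    rw [add_assoc, ← cubeE_union disjoint_sdiff, union_sdiff_of_subset hJK]
  rw [hsplit] at hK ⊢
  exact hf.le_add_cubeE (add_nonneg hℓ (cubeE_nonneg J)) _ hK

end StepMonotoneOnBox

theorem exists_subset_top_bot {α β : Type*} {c : Fin s → ℤ}
    {h : (Fin s → ℤ) → α} {h0 : (Fin s → ℤ) → β}
    (h_stab : ∀ (ℓ ℓbar : Fin s → ℤ) (v : Fin s), 0 ≤ ℓ → ℓ + cubeE {v} ≤ c →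
      0 ≤ ℓbar → ℓbar v = 0 → ℓ + ℓbar + cubeE {v} ≤ c →
      h ℓ = h (ℓ + cubeE {v}) → h (ℓ + ℓbar) = h (ℓ + ℓbar + cubeE {v}))
    (h_cdp : ∀ (ℓ : Fin s → ℤ) (v : Fin s), 0 ≤ ℓ → ℓ + cubeE {v} ≤ c →
      h (ℓ + cubeE {v}) = h ℓ ∨ h0 (ℓ + cubeE {v}) = h0 ℓ)
    (I : Finset (Fin s)) {ℓ : Fin s → ℤ} (hℓ : 0 ≤ ℓ) (hI : ℓ + cubeE I ≤ c) :
    ∃ I' ⊆ I, h (ℓ + cubeE I') = h (ℓ + cubeE I) ∧ h0 (ℓ + cubeE I') = h0 ℓ := by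
  induction I using Finset.induction_on generalizing ℓ with
  | empty => exact ⟨∅, subset_refl _, rfl, by rw [cubeE_empty, add_zero]⟩
  | insert v J hv ih =>
    have hJ : ℓ + cubeE J ≤ c := add_cubeE_le_of_subset (subset_insert v J) hI
    have hℓv : ℓ + cubeE {v} ≤ c :=
      add_cubeE_le_of_subset (singleton_subset_iff.2 (mem_insert_self v J)) hI
    have hswap : ∀ K : Finset (Fin s), ℓ + (cubeE K + cubeE {v}) = ℓ + cubeE {v} + cubeE K :=
      fun K => by abel
    rw [cubeE_insert hv] at hI ⊢
    rcases h_cdp ℓ v hℓ hℓv with h_flat | h0_flat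
    · obtain ⟨I', hI'J, hh, hh0⟩ := ih hℓ hJ
      have hJv : h (ℓ + cubeE J) = h (ℓ + cubeE J + cubeE {v}) :=
        h_stab ℓ (cubeE J) v hℓ hℓv (cubeE_nonneg J) (by simp [cubeE, hv])
          (by rwa [add_assoc]) h_flat.symm
      exact ⟨I', hI'J.trans (subset_insert v J), by rw [hh, hJv, add_assoc], hh0⟩
    · obtain ⟨I', hI'J, hh, hh0⟩ :=
        ih (add_nonneg hℓ (cubeE_nonneg {v})) (by rwa [← hswap])
      have hvI' : v ∉ I' := fun hvI' => hv (hI'J hvI')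
      refine ⟨insert v I', insert_subset_insert v hI'J, ?_, ?_⟩
      · rw [cubeE_insert hvI', hswap, hswap, hh]
      · rw [cubeE_insert hvI', hswap, hh0, h0_flat]

end Cube

open Cube

theorem statement2_general {s : ℕ} (c : Fin s → ℤ)
    (h h0 : (Fin s → ℤ) → ℤ)
    (h_mono : ∀ (ℓ : Fin s → ℤ) (v : Fin s), 0 ≤ ℓ → ℓ + cubeE {v} ≤ c →
      h ℓ ≤ h (ℓ + cubeE {v}))
    (h0_anti : ∀ (ℓ : Fin s → ℤ) (v : Fin s), 0 ≤ ℓ → ℓ + cubeE {v} ≤ c →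
      h0 (ℓ + cubeE {v}) ≤ h0 ℓ)
    (h_stab : ∀ (ℓ ℓbar : Fin s → ℤ) (v : Fin s), 0 ≤ ℓ → ℓ + cubeE {v} ≤ c →
      0 ≤ ℓbar → ℓbar v = 0 → ℓ + ℓbar + cubeE {v} ≤ c →
      h ℓ = h (ℓ + cubeE {v}) → h (ℓ + ℓbar) = h (ℓ + ℓbar + cubeE {v}))
    (h_cdp : ∀ (ℓ : Fin s → ℤ) (v : Fin s), 0 ≤ ℓ → ℓ + cubeE {v} ≤ c →
      h (ℓ + cubeE {v}) - h ℓ = 0 ∨ h0 (ℓ + cubeE {v}) - h0 ℓ = 0)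
    (ℓ : Fin s → ℤ) (I : Finset (Fin s)) (hℓ : 0 ≤ ℓ) (hℓI : ℓ + cubeE I ≤ c) :
    I.powerset.sup' (Finset.powerset_nonempty I)
        (fun I' => h (ℓ + cubeE I') + h0 (ℓ + cubeE I') - h0 0)
      - (h ℓ + h0 ℓ - h0 0)
    = h (ℓ + cubeE I) - h ℓ := by
  have h_step : StepMonotoneOnBox c h := h_mono
  have h0_step : StepMonotoneOnBox c (OrderDual.toDual ∘ h0) := h0_anti
  obtain ⟨I₀, hI₀, hh, hh0⟩ := exists_subset_top_bot h_stab
    (fun ℓ v hℓ hv => (h_cdp ℓ v hℓ hv).imp sub_eq_zero.1 sub_eq_zero.1) I hℓ hℓI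
  have hsup : I.powerset.sup' (Finset.powerset_nonempty I)
      (fun I' => h (ℓ + cubeE I') + h0 (ℓ + cubeE I') - h0 0)
      = h (ℓ + cubeE I) + h0 ℓ - h0 0 := by
    refine le_antisymm (sup'_le _ _ fun I' hI' => ?_)
      (le_sup'_of_le _ (mem_powerset.2 hI₀) (by rw [hh, hh0]))
    have hI'I := mem_powerset.1 hI'
    have h_le := h_step.add_cubeE_le_add_cubeE hℓ hI'I hℓI
    have h0_le := h0_step.le_add_cubeE hℓ I' (add_cubeE_le_of_subset hI'I hℓI)
    simp only [Function.comp_apply, OrderDual.toDual_le_toDual] at h0_le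
    omega
  rw [hsup]
  ring

/-- if `h` satisfies the stability property and `(h, h°)` satisfies the
Combinatorial Duality Property, then for every cube `(ℓ, I)` of `R` one has
`max{w(ℓ+E_{I'}) : I' ⊆ I} − w(ℓ) = h(ℓ+E_I) − h(ℓ)`. -/
theorem statement2 {s : ℕ} (hs : 1 ≤ s) (c : Fin s → ℤ)
    (hc : cubeE (Finset.univ : Finset (Fin s)) ≤ c)
    (h h0 : (Fin s → ℤ) → ℤ)
    (h_zero : h 0 = 0)
    (h_mono : ∀ (ℓ : Fin s → ℤ) (v : Fin s), 0 ≤ ℓ → ℓ + cubeE {v} ≤ c →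
      h ℓ ≤ h (ℓ + cubeE {v}))
    (h0_anti : ∀ (ℓ : Fin s → ℤ) (v : Fin s), 0 ≤ ℓ → ℓ + cubeE {v} ≤ c →
      h0 (ℓ + cubeE {v}) ≤ h0 ℓ)
    (h_stab : ∀ (ℓ ℓbar : Fin s → ℤ) (v : Fin s), 0 ≤ ℓ → ℓ + cubeE {v} ≤ c →
      0 ≤ ℓbar → ℓbar v = 0 → ℓ + ℓbar + cubeE {v} ≤ c →
      h ℓ = h (ℓ + cubeE {v}) → h (ℓ + ℓbar) = h (ℓ + ℓbar + cubeE {v}))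
    (h_cdp : ∀ (ℓ : Fin s → ℤ) (v : Fin s), 0 ≤ ℓ → ℓ + cubeE {v} ≤ c →
      h (ℓ + cubeE {v}) - h ℓ = 0 ∨ h0 (ℓ + cubeE {v}) - h0 ℓ = 0)
    (ℓ : Fin s → ℤ) (I : Finset (Fin s)) (hℓ : 0 ≤ ℓ) (hℓI : ℓ + cubeE I ≤ c) :
    I.powerset.sup' (Finset.powerset_nonempty I)
        (fun I' => h (ℓ + cubeE I') + h0 (ℓ + cubeE I') - h0 0)
      - (h ℓ + h0 ℓ - h0 0)
    = h (ℓ + cubeE I) - h ℓ :=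
  statement2_general c h h0 h_mono h0_anti h_stab h_cdp ℓ I hℓ hℓI
end

section
/- Assume h satisfies the stability property and the pair (h,h°) satisfies the Combinatorial Duality Property (on all of ℕ^s). Then for every ℓ ∈ ℕ^s one has the coefficientwise identity Σ_{I ⊆ {1,…,s}} (−1)^{|I|+1} · max{w(ℓ+E_{I'}) : I' ⊆ I} = Σ_{I ⊆ {1,…,s}} (−1)^{|I|+1} · h(ℓ+E_I). -/
/-!
For each `I`, the maximum of `w` over the subcube `{ℓ + E_{I'} : I' ⊆ I}` equals
`h(ℓ + E_I) + h°(ℓ) − h°(0)`: monotonicity of `h` and antitonicity of `h°` give `≤`, and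
stability together with the duality property produce an `I' ⊆ I` at which `h` already reaches
`h(ℓ + E_I)` while `h°` is still `h°(ℓ)`. The constant `h°(ℓ) − h°(0)` then drops out of the
alternating sum over the subsets of a nonempty set.
-/

open Finset

/-- `cubeEN I` is the lattice vector `E_I = ∑_{v ∈ I} E_v` in `ℕ^s`. -/
def cubeEN {s : ℕ} (I : Finset (Fin s)) : Fin s → ℕ := fun v => if v ∈ I then 1 else 0

section cubeEN

variable {s : ℕ}

@[simp]
lemma cubeEN_empty : cubeEN (∅ : Finset (Fin s)) = 0 := by
  funext w
  simp [cubeEN]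

lemma cubeEN_apply_of_notMem {v : Fin s} {K : Finset (Fin s)} (hv : v ∉ K) :
    cubeEN K v = 0 := by
  simp [cubeEN, hv]

lemma cubeEN_insert {v : Fin s} {K : Finset (Fin s)} (hv : v ∉ K) :
    cubeEN (insert v K) = cubeEN K + cubeEN {v} := by
  funext w
  by_cases hw : w = v
  · subst hw
    simp [cubeEN, hv]
  · simp [cubeEN, hw]

lemma cubeEN_add_cubeEN_sdiff {I J : Finset (Fin s)} (hIJ : I ⊆ J) :
    cubeEN I + cubeEN (J \ I) = cubeEN J := by
  funext w
  by_cases hwI : w ∈ I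
  · simp [cubeEN, hwI, hIJ hwI]
  · by_cases hwJ : w ∈ J <;> simp [cubeEN, hwI, hwJ]

end cubeEN

section Steps

variable {s : ℕ} {α : Type*}

lemma le_apply_add_cubeEN [Preorder α] {f : (Fin s → ℕ) → α}
    (hf : ∀ (ℓ : Fin s → ℕ) (v : Fin s), f ℓ ≤ f (ℓ + cubeEN {v}))
    (K : Finset (Fin s)) (ℓ : Fin s → ℕ) : f ℓ ≤ f (ℓ + cubeEN K) := by
  induction K using Finset.induction_on generalizing ℓ with
  | empty => simp
  | insert v K hv ih =>
    rw [cubeEN_insert hv, ← add_assoc]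
    exact (ih ℓ).trans (hf _ _)

lemma apply_add_cubeEN_mono [Preorder α] {f : (Fin s → ℕ) → α}
    (hf : ∀ (ℓ : Fin s → ℕ) (v : Fin s), f ℓ ≤ f (ℓ + cubeEN {v}))
    {I J : Finset (Fin s)} (hIJ : I ⊆ J) (ℓ : Fin s → ℕ) :
    f (ℓ + cubeEN I) ≤ f (ℓ + cubeEN J) := by
  simpa only [add_assoc, cubeEN_add_cubeEN_sdiff hIJ] using
    le_apply_add_cubeEN hf (J \ I) (ℓ + cubeEN I)

lemma apply_add_cubeEN_le [Preorder α] {f : (Fin s → ℕ) → α}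
    (hf : ∀ (ℓ : Fin s → ℕ) (v : Fin s), f (ℓ + cubeEN {v}) ≤ f ℓ)
    (K : Finset (Fin s)) (ℓ : Fin s → ℕ) : f (ℓ + cubeEN K) ≤ f ℓ :=
  le_apply_add_cubeEN (f := OrderDual.toDual ∘ f) hf K ℓ

/-- The stability property, from a single direction `E_v` to a set of directions `E_K`. -/
lemma apply_add_add_cubeEN_eq [PartialOrder α] {f : (Fin s → ℕ) → α}
    (hf_mono : ∀ (ℓ : Fin s → ℕ) (v : Fin s), f ℓ ≤ f (ℓ + cubeEN {v}))
    (hf_stab : ∀ (ℓ ℓbar : Fin s → ℕ) (v : Fin s), ℓbar v = 0 →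
      f ℓ = f (ℓ + cubeEN {v}) → f (ℓ + ℓbar) = f (ℓ + ℓbar + cubeEN {v}))
    (K : Finset (Fin s)) {ℓ ℓbar : Fin s → ℕ} (hℓbar : ∀ v ∈ K, ℓbar v = 0)
    (hK : f ℓ = f (ℓ + cubeEN K)) : f (ℓ + ℓbar) = f (ℓ + ℓbar + cubeEN K) := by
  induction K using Finset.induction_on with
  | empty => simp
  | insert u K hu ih =>
    rw [cubeEN_insert hu, ← add_assoc] at hK ⊢
    -- `f ℓ ≤ f (ℓ + E_K) ≤ f (ℓ + E_K + E_u)` with equal ends, so both steps are equalities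
    have hℓK : f ℓ = f (ℓ + cubeEN K) :=
      le_antisymm (le_apply_add_cubeEN hf_mono K ℓ) (hK ▸ hf_mono _ u)
    have hKu : f (ℓ + cubeEN K) = f (ℓ + cubeEN K + cubeEN {u}) := hℓK ▸ hK
    have hstep := hf_stab (ℓ + cubeEN K) ℓbar u (hℓbar u (mem_insert_self u K)) hKu
    rw [ih (fun v hv => hℓbar v (mem_insert_of_mem hv)) hℓK, add_right_comm ℓ ℓbar, hstep]

end Steps

section Duality

variable {s : ℕ} {h h0 : (Fin s → ℕ) → ℤ}

lemma exists_subset_apply_eq_and_apply_eq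
    (h_mono : ∀ (ℓ : Fin s → ℕ) (v : Fin s), h ℓ ≤ h (ℓ + cubeEN {v}))
    (h_stab : ∀ (ℓ ℓbar : Fin s → ℕ) (v : Fin s), ℓbar v = 0 →
      h ℓ = h (ℓ + cubeEN {v}) → h (ℓ + ℓbar) = h (ℓ + ℓbar + cubeEN {v}))
    (h_cdp : ∀ (ℓ : Fin s → ℕ) (v : Fin s),
      h (ℓ + cubeEN {v}) - h ℓ = 0 ∨ h0 (ℓ + cubeEN {v}) - h0 ℓ = 0)
    (I : Finset (Fin s)) (ℓ : Fin s → ℕ) :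
    ∃ I' ⊆ I, h (ℓ + cubeEN I') = h (ℓ + cubeEN I) ∧ h0 (ℓ + cubeEN I') = h0 ℓ := by
  induction I using Finset.induction_on with
  | empty => exact ⟨∅, subset_rfl, rfl, by simp⟩
  | insert v J hv ih =>
    obtain ⟨I', hI'J, hh, hh0⟩ := ih
    set p := ℓ + cubeEN I'
    have hvK : v ∉ J \ I' := fun hv' => hv (mem_sdiff.mp hv').1
    have hJ : ℓ + cubeEN J = p + cubeEN (J \ I') := by
      rw [add_assoc, cubeEN_add_cubeEN_sdiff hI'J]
    have hvJ : ℓ + cubeEN (insert v J) = p + cubeEN (J \ I') + cubeEN {v} := by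
      rw [cubeEN_insert hv, ← add_assoc, hJ]
    rw [hJ] at hh
    rcases h_cdp p v with hc | hc
    · -- `h` is flat in direction `v` at `p`, hence also at `p + E_{J \ I'}`
      refine ⟨I', hI'J.trans (subset_insert v J), ?_, hh0⟩
      rw [hvJ, ← h_stab p _ v (cubeEN_apply_of_notMem hvK) (by omega), hh]
    · -- `h°` is flat in direction `v` at `p`; move the witness to `p + E_v`
      have hvI' : v ∉ I' := fun hv' => hv (hI'J hv')
      refine ⟨insert v I', insert_subset_insert v hI'J, ?_, ?_⟩
      · have := apply_add_add_cubeEN_eq h_mono h_stab (J \ I') (ℓbar := cubeEN {v})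
          (fun w hw => cubeEN_apply_of_notMem (fun hwv => hvK (mem_singleton.mp hwv ▸ hw))) hh
        rw [cubeEN_insert hvI', ← add_assoc, hvJ, this, add_right_comm]
      · rw [cubeEN_insert hvI', ← add_assoc]
        change h0 (p + cubeEN {v}) = h0 ℓ
        omega

lemma sup'_powerset_eq
    (h_mono : ∀ (ℓ : Fin s → ℕ) (v : Fin s), h ℓ ≤ h (ℓ + cubeEN {v}))
    (h0_anti : ∀ (ℓ : Fin s → ℕ) (v : Fin s), h0 (ℓ + cubeEN {v}) ≤ h0 ℓ)
    (h_stab : ∀ (ℓ ℓbar : Fin s → ℕ) (v : Fin s), ℓbar v = 0 →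
      h ℓ = h (ℓ + cubeEN {v}) → h (ℓ + ℓbar) = h (ℓ + ℓbar + cubeEN {v}))
    (h_cdp : ∀ (ℓ : Fin s → ℕ) (v : Fin s),
      h (ℓ + cubeEN {v}) - h ℓ = 0 ∨ h0 (ℓ + cubeEN {v}) - h0 ℓ = 0)
    (I : Finset (Fin s)) (ℓ : Fin s → ℕ) (c : ℤ) :
    I.powerset.sup' (powerset_nonempty I) (fun I' => h (ℓ + cubeEN I') + h0 (ℓ + cubeEN I') - c)
      = h (ℓ + cubeEN I) + (h0 ℓ - c) := by
  apply le_antisymm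
  · refine sup'_le _ _ fun I' hI' => ?_
    have := apply_add_cubeEN_mono h_mono (mem_powerset.mp hI') ℓ
    have := apply_add_cubeEN_le h0_anti I' ℓ
    omega
  · obtain ⟨I', hI'I, hh, hh0⟩ := exists_subset_apply_eq_and_apply_eq h_mono h_stab h_cdp I ℓ
    calc h (ℓ + cubeEN I) + (h0 ℓ - c) = h (ℓ + cubeEN I') + h0 (ℓ + cubeEN I') - c := by
          rw [hh, hh0, add_sub_assoc]
      _ ≤ _ := le_sup' (fun I' => h (ℓ + cubeEN I') + h0 (ℓ + cubeEN I') - c)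
          (mem_powerset.mpr hI'I)

end Duality

lemma sum_powerset_neg_one_pow_card_add_one_of_nonempty {ι : Type*} {x : Finset ι}
    (hx : x.Nonempty) : ∑ I ∈ x.powerset, (-1 : ℤ) ^ (I.card + 1) = 0 := by
  simp only [pow_succ, ← sum_mul, sum_powerset_neg_one_pow_card_of_nonempty hx, zero_mul]

theorem statement5_general {s : ℕ} (hs : 1 ≤ s)
    (h h0 : (Fin s → ℕ) → ℤ)
    (h_mono : ∀ (ℓ : Fin s → ℕ) (v : Fin s), h ℓ ≤ h (ℓ + cubeEN {v}))
    (h0_anti : ∀ (ℓ : Fin s → ℕ) (v : Fin s), h0 (ℓ + cubeEN {v}) ≤ h0 ℓ)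
    (h_stab : ∀ (ℓ ℓbar : Fin s → ℕ) (v : Fin s), ℓbar v = 0 →
      h ℓ = h (ℓ + cubeEN {v}) → h (ℓ + ℓbar) = h (ℓ + ℓbar + cubeEN {v}))
    (h_cdp : ∀ (ℓ : Fin s → ℕ) (v : Fin s),
      h (ℓ + cubeEN {v}) - h ℓ = 0 ∨ h0 (ℓ + cubeEN {v}) - h0 ℓ = 0) :
    ∀ ℓ : Fin s → ℕ,
      ∑ I ∈ (Finset.univ : Finset (Fin s)).powerset,
        (-1 : ℤ) ^ (I.card + 1) *
          I.powerset.sup' (Finset.powerset_nonempty I)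
            (fun I' => h (ℓ + cubeEN I') + h0 (ℓ + cubeEN I') - h0 0)
      = ∑ I ∈ (Finset.univ : Finset (Fin s)).powerset,
          (-1 : ℤ) ^ (I.card + 1) * h (ℓ + cubeEN I) := by
  intro ℓ
  have hsum : ∑ I ∈ (univ : Finset (Fin s)).powerset, (-1 : ℤ) ^ (I.card + 1) = 0 :=
    sum_powerset_neg_one_pow_card_add_one_of_nonempty (univ_nonempty_iff.mpr ⟨⟨0, hs⟩⟩)
  simp only [sup'_powerset_eq h_mono h0_anti h_stab h_cdp, mul_add, sum_add_distrib, ← sum_mul,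
    hsum, zero_mul, add_zero]

/-- if `h` satisfies the stability property and `(h, h°)` satisfies the
Combinatorial Duality Property on all of `ℕ^s`, then for every `ℓ ∈ ℕ^s`,
`Σ_{I ⊆ {1,…,s}} (−1)^{|I|+1} · max{w(ℓ+E_{I'}) : I' ⊆ I}
  = Σ_{I ⊆ {1,…,s}} (−1)^{|I|+1} · h(ℓ+E_I)`. -/
theorem statement5 {s : ℕ} (hs : 1 ≤ s)
    (h h0 : (Fin s → ℕ) → ℤ)
    (h_zero : h 0 = 0)
    (h_mono : ∀ (ℓ : Fin s → ℕ) (v : Fin s), h ℓ ≤ h (ℓ + cubeEN {v}))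
    (h0_anti : ∀ (ℓ : Fin s → ℕ) (v : Fin s), h0 (ℓ + cubeEN {v}) ≤ h0 ℓ)
    (h_stab : ∀ (ℓ ℓbar : Fin s → ℕ) (v : Fin s), ℓbar v = 0 →
      h ℓ = h (ℓ + cubeEN {v}) → h (ℓ + ℓbar) = h (ℓ + ℓbar + cubeEN {v}))
    (h_cdp : ∀ (ℓ : Fin s → ℕ) (v : Fin s),
      h (ℓ + cubeEN {v}) - h ℓ = 0 ∨ h0 (ℓ + cubeEN {v}) - h0 ℓ = 0) :
    ∀ ℓ : Fin s → ℕ,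
      ∑ I ∈ (Finset.univ : Finset (Fin s)).powerset,
        (-1 : ℤ) ^ (I.card + 1) *
          I.powerset.sup' (Finset.powerset_nonempty I)
            (fun I' => h (ℓ + cubeEN I') + h0 (ℓ + cubeEN I') - h0 0)
      = ∑ I ∈ (Finset.univ : Finset (Fin s)).powerset,
          (-1 : ℤ) ^ (I.card + 1) * h (ℓ + cubeEN I) :=
  statement5_general hs h h0 h_mono h0_anti h_stab h_cdp
end

section
/- For every ℓ ∈ ℕ^r and every index i, the increments satisfy h(ℓ+E_i) − h(ℓ) ∈ {0,1} and h̄(ℓ+E_i) − h̄(ℓ) ∈ {0,1}, and their sum is exactly 1: (h(ℓ+E_i) − h(ℓ)) + (h̄(ℓ+E_i) − h̄(ℓ)) = 1. In particular the pair (h, δ − h̄) satisfies the Combinatorial Duality Property for any constant δ. -/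
/-!
Both `h(ℓ) + h̄(ℓ)` equal `dim V / Ḡ(ℓ) = ∑ ℓ_i`: the image of `O` in `V / Ḡ(ℓ)` is
`O / (O ∩ Ḡ(ℓ))` and its cokernel is `V / (Ḡ(ℓ) + O)`. Passing from `ℓ` to `ℓ + E_i` raises
this sum by one while neither `h` nor `h̄` decreases, so exactly one of them grows, by one.
-/

/-- `Gbar r ℓ` is the subspace of `r`-tuples of power series whose `i`-th component has
order at least `ℓ i`, for every `i`. -/
noncomputable def Gbar (r : ℕ) (ℓ : Fin r → ℕ) : Submodule ℂ (Fin r → PowerSeries ℂ) where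
  carrier := {f | ∀ i : Fin r, (ℓ i : ℕ∞) ≤ (f i).order}
  zero_mem' := by
    intro i
    simp [PowerSeries.order_zero]
  add_mem' := by
    intro a b ha hb i
    refine le_trans (le_min (ha i) (hb i)) ?_
    simpa using PowerSeries.min_order_le_order_add (a i) (b i)
  smul_mem' := by
    intro c f hf i
    refine PowerSeries.le_order _ _ ?_
    intro n hn
    have hlt : (n : ℕ∞) < ((f : Fin r → PowerSeries ℂ) i).order := lt_of_lt_of_le hn (hf i)
    have : (PowerSeries.coeff (R := ℂ) n) ((c • f) i) = c • (PowerSeries.coeff (R := ℂ) n) (f i) := by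
      simp
    rw [this, PowerSeries.coeff_of_lt_order n hlt, smul_zero]

/-- `F O ℓ = O ∩ Ḡ(ℓ)`, the valuation filtration of the subspace `O`. -/
noncomputable def Ffil (r : ℕ) (O : Submodule ℂ (Fin r → PowerSeries ℂ)) (ℓ : Fin r → ℕ) :
    Submodule ℂ (Fin r → PowerSeries ℂ) :=
  O ⊓ Gbar r ℓ

/-- `hfun O ℓ = dim_ℂ O / (O ∩ Ḡ(ℓ))`, the Hilbert function of the filtration. -/
noncomputable def hfun (r : ℕ) (O : Submodule ℂ (Fin r → PowerSeries ℂ)) (ℓ : Fin r → ℕ) : ℕ :=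
  Module.finrank ℂ (O ⧸ (Gbar r ℓ).comap O.subtype)

/-- `hbarfun O ℓ = dim_ℂ V / (Ḡ(ℓ) + O)`. -/
noncomputable def hbarfun (r : ℕ) (O : Submodule ℂ (Fin r → PowerSeries ℂ)) (ℓ : Fin r → ℕ) : ℕ :=
  Module.finrank ℂ ((Fin r → PowerSeries ℂ) ⧸ (Gbar r ℓ ⊔ O))

/-- `eN i` is the `i`-th standard basis vector of `ℕ^r`. -/
def eN {r : ℕ} (i : Fin r) : Fin r → ℕ := fun j => if j = i then 1 else 0

open Module

section
variable {K V : Type*} [Field K] [AddCommGroup V] [Module K V]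

noncomputable def quotientComapSubtypeEquivMapMkQ (G O : Submodule K V) :
    (O ⧸ G.comap O.subtype) ≃ₗ[K] O.map G.mkQ :=
  (Submodule.quotEquivOfEq _ _ (by rw [LinearMap.ker_comp, Submodule.ker_mkQ])).trans
    ((G.mkQ ∘ₗ O.subtype).quotKerEquivRange.trans
      (LinearEquiv.ofEq _ _ (by rw [LinearMap.range_comp, Submodule.range_subtype])))

theorem finrank_quotient_le_of_le {p q : Submodule K V} (hpq : p ≤ q)
    [FiniteDimensional K (V ⧸ p)] : finrank K (V ⧸ q) ≤ finrank K (V ⧸ p) :=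
  LinearMap.finrank_le_finrank_of_surjective (Submodule.factor_surjective hpq)

variable (G O : Submodule K V) [FiniteDimensional K (V ⧸ G)]

instance : FiniteDimensional K (O ⧸ G.comap O.subtype) :=
  .equiv (quotientComapSubtypeEquivMapMkQ G O).symm

instance : FiniteDimensional K (V ⧸ (G ⊔ O)) :=
  .equiv (Submodule.quotientQuotientEquivQuotientSup G O)

theorem finrank_quotient_comap_subtype_add_finrank_quotient_sup :
    finrank K (O ⧸ G.comap O.subtype) + finrank K (V ⧸ (G ⊔ O)) = finrank K (V ⧸ G) := by
  rw [(quotientComapSubtypeEquivMapMkQ G O).finrank_eq,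
    ← (Submodule.quotientQuotientEquivQuotientSup G O).finrank_eq, add_comm]
  exact Submodule.finrank_quotient_add_finrank _

end

theorem Gbar_antitone (r : ℕ) : Antitone (Gbar r) := fun _ _ hℓ _ hf i =>
  le_trans (by exact_mod_cast hℓ i) (hf i)

noncomputable def coeffsBelow (r : ℕ) (ℓ : Fin r → ℕ) :
    (Fin r → PowerSeries ℂ) →ₗ[ℂ] (∀ j : Fin r, Fin (ℓ j) → ℂ) :=
  LinearMap.pi fun j => LinearMap.pi fun k : Fin (ℓ j) =>
    (PowerSeries.coeff (k : ℕ)).comp (LinearMap.proj j)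

theorem ker_coeffsBelow (r : ℕ) (ℓ : Fin r → ℕ) : LinearMap.ker (coeffsBelow r ℓ) = Gbar r ℓ := by
  ext f
  simp only [LinearMap.mem_ker, coeffsBelow, funext_iff, LinearMap.pi_apply,
    LinearMap.comp_apply, LinearMap.proj_apply, Pi.zero_apply]
  refine forall_congr' fun j => ⟨fun h => PowerSeries.le_order _ _ fun k hk => ?_,
    fun h k => PowerSeries.coeff_of_lt_order _ ((ENat.natCast_lt_natCast.mpr k.2).trans_le h)⟩
  exact h ⟨k, by exact_mod_cast hk⟩

theorem coeffsBelow_surjective (r : ℕ) (ℓ : Fin r → ℕ) : Function.Surjective (coeffsBelow r ℓ) := by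
  intro c
  refine ⟨fun j => PowerSeries.mk fun n => if h : n < ℓ j then c j ⟨n, h⟩ else 0, ?_⟩
  ext j k
  simp [coeffsBelow, k.2]

theorem finrank_quotient_Gbar (r : ℕ) (ℓ : Fin r → ℕ) :
    finrank ℂ ((Fin r → PowerSeries ℂ) ⧸ Gbar r ℓ) = ∑ j, ℓ j := by
  rw [← ker_coeffsBelow, (coeffsBelow r ℓ).quotKerEquivOfSurjective (coeffsBelow_surjective r ℓ)
    |>.finrank_eq]
  simp [finrank_pi_fintype]

instance (r : ℕ) (ℓ : Fin r → ℕ) : FiniteDimensional ℂ ((Fin r → PowerSeries ℂ) ⧸ Gbar r ℓ) := by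
  rw [← ker_coeffsBelow]
  exact .equiv ((coeffsBelow r ℓ).quotKerEquivOfSurjective (coeffsBelow_surjective r ℓ)).symm

theorem hfun_add_hbarfun (r : ℕ) (O : Submodule ℂ (Fin r → PowerSeries ℂ)) (ℓ : Fin r → ℕ) :
    hfun r O ℓ + hbarfun r O ℓ = ∑ j, ℓ j := by
  rw [hfun, hbarfun, finrank_quotient_comap_subtype_add_finrank_quotient_sup, finrank_quotient_Gbar]

theorem hfun_mono (r : ℕ) (O : Submodule ℂ (Fin r → PowerSeries ℂ)) : Monotone (hfun r O) :=
  fun _ _ hℓ => finrank_quotient_le_of_le (Submodule.comap_mono (Gbar_antitone r hℓ))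

theorem hbarfun_mono (r : ℕ) (O : Submodule ℂ (Fin r → PowerSeries ℂ)) : Monotone (hbarfun r O) :=
  fun _ _ hℓ => finrank_quotient_le_of_le (sup_le_sup_right (Gbar_antitone r hℓ) O)

theorem sum_add_eN {r : ℕ} (ℓ : Fin r → ℕ) (i : Fin r) : ∑ j, (ℓ + eN i) j = ∑ j, ℓ j + 1 := by
  simp [eN, Finset.sum_add_distrib]

theorem statement9_general (r : ℕ) (O : Submodule ℂ (Fin r → PowerSeries ℂ)) :
    ∀ (ℓ : Fin r → ℕ) (i : Fin r),
      ((hfun r O (ℓ + eN i) : ℤ) - hfun r O ℓ = 0 ∨ (hfun r O (ℓ + eN i) : ℤ) - hfun r O ℓ = 1) ∧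
      ((hbarfun r O (ℓ + eN i) : ℤ) - hbarfun r O ℓ = 0 ∨
        (hbarfun r O (ℓ + eN i) : ℤ) - hbarfun r O ℓ = 1) ∧
      ((hfun r O (ℓ + eN i) : ℤ) - hfun r O ℓ) +
        ((hbarfun r O (ℓ + eN i) : ℤ) - hbarfun r O ℓ) = 1 ∧
      ∀ δ : ℤ, ¬(((hfun r O (ℓ + eN i) : ℤ) - hfun r O ℓ ≠ 0) ∧
        ((δ - hbarfun r O (ℓ + eN i)) - (δ - hbarfun r O ℓ) ≠ 0)) := by
  intro ℓ i
  have hle : ℓ ≤ ℓ + eN i := le_add_of_nonneg_right fun _ => Nat.zero_le _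
  have h_mono := hfun_mono r O hle
  have hbar_mono := hbarfun_mono r O hle
  have h_sum := hfun_add_hbarfun r O ℓ
  have h_sum_succ := hfun_add_hbarfun r O (ℓ + eN i)
  rw [sum_add_eN] at h_sum_succ
  refine ⟨?_, ?_, ?_, fun δ => ?_⟩ <;> omega

/-- the increments of `h` and `h̄` in any basis direction lie in `{0,1}`
and sum to exactly `1`; in particular the pair `(h, δ − h̄)` satisfies the Combinatorial
Duality Property for any constant `δ`. -/
theorem statement9 (r : ℕ) (hr : 1 ≤ r) (O : Submodule ℂ (Fin r → PowerSeries ℂ)) :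
    ∀ (ℓ : Fin r → ℕ) (i : Fin r),
      ((hfun r O (ℓ + eN i) : ℤ) - hfun r O ℓ = 0 ∨ (hfun r O (ℓ + eN i) : ℤ) - hfun r O ℓ = 1) ∧
      ((hbarfun r O (ℓ + eN i) : ℤ) - hbarfun r O ℓ = 0 ∨
        (hbarfun r O (ℓ + eN i) : ℤ) - hbarfun r O ℓ = 1) ∧
      ((hfun r O (ℓ + eN i) : ℤ) - hfun r O ℓ) +
        ((hbarfun r O (ℓ + eN i) : ℤ) - hbarfun r O ℓ) = 1 ∧
      ∀ δ : ℤ, ¬(((hfun r O (ℓ + eN i) : ℤ) - hfun r O ℓ ≠ 0) ∧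
        ((δ - hbarfun r O (ℓ + eN i)) - (δ - hbarfun r O ℓ) ≠ 0)) :=
  statement9_general r O
end

section
/- Let N_1, …, N_s ∈ ℤ² have both coordinates positive and let m_1, …, m_s ∈ ℤ. Set c_j = m_j + 1 − ⟨N_j,(1,1)⟩ for each j, and for ℓ ∈ ℤ^s with 0 ≤ ℓ ≤ c define h(ℓ) as the number of points p ∈ ℤ² with p_1 ≥ 1, p_2 ≥ 1, ⟨N_j,p⟩ ≤ m_j for at least one j, and ⟨N_j, p − (1,1)⟩ < ℓ_j for at least one j (this set is finite). Assume that there is no index i and no point q ∈ ℤ² with q_1 ≥ 1, q_2 ≥ 1 such that ⟨N_i,q⟩ = m_i and ⟨N_j,q⟩ > m_j for every j ≠ i (no face of the Newton diagram contains a lattice point in its relative interior). Then the pair (h, h^{sym}) satisfies the Combinatorial Duality Property: for every index i and every ℓ with 0 ≤ ℓ and ℓ + E_i ≤ c, at least one of the equalities h(ℓ+E_i) = h(ℓ) or h(c−ℓ) = h(c−ℓ−E_i) holds. -/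
/-- The standard inner product on `ℤ²`. -/
def ip (a p : ℤ × ℤ) : ℤ := a.1 * p.1 + a.2 * p.2

/-- The Hilbert function of a Newton diagram: `hN N m ℓ` is the number of lattice points
`p ∈ (ℤ_{>0})²` lying on or below the diagram (`⟨N_j,p⟩ ≤ m_j` for at least one `j`) whose
degree is not `≥ ℓ` (`⟨N_j, p − (1,1)⟩ < ℓ_j` for at least one `j`). -/
noncomputable def hN {s : ℕ} (N : Fin s → ℤ × ℤ) (m : Fin s → ℤ) (ℓ : Fin s → ℤ) : ℕ :=
  Set.ncard {p : ℤ × ℤ | 1 ≤ p.1 ∧ 1 ≤ p.2 ∧ (∃ j, ip (N j) p ≤ m j) ∧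
    (∃ j, ip (N j) (p - (1, 1)) < ℓ j)}

lemma key {s : ℕ} (N : Fin s → ℤ × ℤ) (m : Fin s → ℤ) (i : Fin s) (ℓ : Fin s → ℤ)
    (h : ¬ ∃ p : ℤ × ℤ, 1 ≤ p.1 ∧ 1 ≤ p.2 ∧ (∃ j, ip (N j) p ≤ m j) ∧
      ip (N i) (p - (1, 1)) = ℓ i ∧ ∀ j, ℓ j ≤ ip (N j) (p - (1, 1))) :
    hN N m (ℓ + cubeE {i}) = hN N m ℓ := by
  unfold hN
  congr 1
  ext p
  simp only [Set.mem_setOf_eq]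
  constructor
  · rintro ⟨h1, h2, h3, j, hj⟩
    refine ⟨h1, h2, h3, ?_⟩
    by_cases hall : ∀ k, ℓ k ≤ ip (N k) (p - (1, 1))
    · exfalso
      have hji : j = i := by
        by_contra hne
        have hjv : (ℓ + cubeE {i}) j = ℓ j := by
          simp [cubeE, hne]
        rw [hjv] at hj
        exact absurd (hall j) (not_le.mpr hj)
      subst hji
      have hjv : (ℓ + cubeE {j}) j = ℓ j + 1 := by simp [cubeE]
      rw [hjv] at hj
      exact h ⟨p, h1, h2, h3, le_antisymm (by linarith) (hall j), hall⟩
    · push_neg at hall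
      obtain ⟨k, hk⟩ := hall
      exact ⟨k, hk⟩
  · rintro ⟨h1, h2, h3, j, hj⟩
    refine ⟨h1, h2, h3, j, ?_⟩
    have : ℓ j ≤ (ℓ + cubeE {i}) j := by
      simp only [Pi.add_apply, cubeE]
      split <;> linarith
    linarith


/-- if no face of the Newton diagram contains a lattice point in its relative
interior, then the pair `(h, h^{sym})` satisfies the Combinatorial Duality Property: for every
index `i` and every `ℓ` with `0 ≤ ℓ` and `ℓ + E_i ≤ c`, at least one of
`h(ℓ+E_i) = h(ℓ)` or `h(c−ℓ) = h(c−ℓ−E_i)` holds. -/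
theorem statement19 {s : ℕ} (hs : 1 ≤ s) (N : Fin s → ℤ × ℤ) (m : Fin s → ℤ)
    (hNpos : ∀ j, 0 < (N j).1 ∧ 0 < (N j).2)
    (c : Fin s → ℤ) (hcdef : ∀ j, c j = m j + 1 - ip (N j) (1, 1))
    (hnoint : ¬ ∃ (i : Fin s) (q : ℤ × ℤ), 1 ≤ q.1 ∧ 1 ≤ q.2 ∧
      ip (N i) q = m i ∧ ∀ j, j ≠ i → m j < ip (N j) q) :
    ∀ (i : Fin s) (ℓ : Fin s → ℤ), 0 ≤ ℓ → ℓ + cubeE {i} ≤ c →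
      hN N m (ℓ + cubeE {i}) = hN N m ℓ ∨
      hN N m (c - ℓ) = hN N m (c - ℓ - cubeE {i}) := by
  intro i ℓ hl0 hlc
  by_cases H : ∃ p : ℤ × ℤ, 1 ≤ p.1 ∧ 1 ≤ p.2 ∧ (∃ j, ip (N j) p ≤ m j) ∧
      ip (N i) (p - (1, 1)) = ℓ i ∧ ∀ j, ℓ j ≤ ip (N j) (p - (1, 1))
  · right
    have heq : c - ℓ = (c - ℓ - cubeE {i}) + cubeE {i} := by
      funext j; simp
    conv_lhs => rw [heq]
    apply key
    rintro ⟨q, hq1, hq2, _, hqi, hqall⟩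
    obtain ⟨p, hp1, hp2, _, hpi, hpall⟩ := H
    apply hnoint
    refine ⟨i, (p.1 + q.1 - 1, p.2 + q.2 - 1), by simp only; linarith, by simp only; linarith, ?_, ?_⟩
    · have hci : (c - ℓ - cubeE {i}) i = c i - ℓ i - 1 := by
        simp [cubeE]
      rw [hci] at hqi
      have hc := hcdef i
      simp only [ip, Prod.fst_sub, Prod.snd_sub, Prod.fst_one, Prod.snd_one] at hpi hqi hc ⊢
      push_cast at *
      linarith
    · intro j hji
      have hcj : (c - ℓ - cubeE {i}) j = c j - ℓ j := by
        simp [cubeE, hji]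
      have hq := hqall j
      rw [hcj] at hq
      have hp := hpall j
      have hc := hcdef j
      simp only [ip, Prod.fst_sub, Prod.snd_sub, Prod.fst_one, Prod.snd_one] at hp hq hc ⊢
      push_cast at *
      linarith
  · left
    exact key N m i ℓ H
end
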